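/- Fix reals B > 1 and t > 0, write φ for the fractional part of log_B(t), and define R_θ(t) = t·B^{1-φ+θ} for θ ∈ [0, φ] and R_θ(t) = t·B^{θ-φ} for θ ∈ (φ, 1]. Then ∫_0^1 1/R_θ(t) dθ = (B-1)/(B·ln(B)) · (1/t). -/

import Mathlib

open Real Set intervalIntegral

lemma integral_const_rpow_aux {B : ℝ} (hB : 1 < B) (a b : ℝ) :
    ∫ θ in a..b, B ^ θ = (B ^ b - B ^ a) / Real.log B := by
  have hB0 : 0 < B := lt_trans one_pos hB
  have hlog : Real.log B ≠ 0 := ne_of_gt (Real.log_pos hB)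
  have hderiv : ∀ x ∈ Set.uIcc a b,
      HasDerivAt (fun y => B ^ y / Real.log B) (B ^ x) x := by
    intro x _
    have h := ((Real.hasStrictDerivAt_const_rpow hB0 x).hasDerivAt).div_const (Real.log B)
    simpa [mul_div_assoc, div_self hlog] using h
  have hcont : Continuous fun x : ℝ => B ^ x :=
    continuous_const.rpow continuous_id fun x => Or.inl hB0.ne'
  rw [intervalIntegral.integral_eq_sub_of_hasDerivAt hderiv (hcont.intervalIntegrable a b)]
  ring

theorem expected_reciprocal_rounded_value (B t φ T₀ : ℝ) (hB : 1 < B) (ht : 0 < t)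
    (hT₀ : 0 < T₀) (hφ : φ = Int.fract (Real.logb B (t / T₀)))
    (R : ℝ → ℝ)
    (hR : ∀ θ ∈ Set.Icc (0 : ℝ) 1,
      R θ = if θ ≤ φ then t * B ^ (1 - φ + θ) else t * B ^ (θ - φ)) :
    ∫ θ in (0 : ℝ)..1, 1 / R θ = (B - 1) / (B * Real.log B) * (1 / t) := by
  have hB0 : 0 < B := lt_trans one_pos hB
  have hlog : 0 < Real.log B := Real.log_pos hB
  have hφ0 : 0 ≤ φ := hφ ▸ Int.fract_nonneg _
  have hφ1 : φ < 1 := hφ ▸ Int.fract_lt_one _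
  set h : ℝ → ℝ := fun θ => if θ ≤ φ then t⁻¹ * B ^ (φ - 1 - θ) else t⁻¹ * B ^ (φ - θ)
    with hh
  have hRh : ∀ θ ∈ Set.Icc (0 : ℝ) 1, 1 / R θ = h θ := by
    intro θ hθ
    rw [hR θ hθ]
    simp only [hh]
    split_ifs with hle
    · rw [one_div, mul_inv, ← Real.rpow_neg hB0.le]
      congr 1
      ring
    · rw [one_div, mul_inv, ← Real.rpow_neg hB0.le]
      congr 1
      ring
  have hcont1 : Continuous fun θ : ℝ => t⁻¹ * B ^ (φ - 1 - θ) :=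
    continuous_const.mul (continuous_const.rpow (by continuity) fun x => Or.inl hB0.ne')
  have hcont2 : Continuous fun θ : ℝ => t⁻¹ * B ^ (φ - θ) :=
    continuous_const.mul (continuous_const.rpow (by continuity) fun x => Or.inl hB0.ne')
  have hint1 : IntervalIntegrable h MeasureTheory.volume 0 φ := by
    apply IntervalIntegrable.congr_ae (hcont1.intervalIntegrable 0 φ)
    filter_upwards [MeasureTheory.ae_restrict_mem measurableSet_uIoc] with θ hθ
    rw [Set.uIoc_of_le hφ0] at hθ
    simp [hh, hθ.2]
  have hint2 : IntervalIntegrable h MeasureTheory.volume φ 1 := by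
    apply IntervalIntegrable.congr_ae (hcont2.intervalIntegrable φ 1)
    filter_upwards [MeasureTheory.ae_restrict_mem measurableSet_uIoc] with θ hθ
    rw [Set.uIoc_of_le hφ1.le] at hθ
    simp [hh, not_le.mpr hθ.1]
  have step1 : ∫ θ in (0 : ℝ)..1, 1 / R θ = ∫ θ in (0 : ℝ)..1, h θ := by
    apply intervalIntegral.integral_congr
    intro θ hθ
    rw [Set.uIcc_of_le (by norm_num)] at hθ
    exact hRh θ hθ
  have step2 : (∫ θ in (0 : ℝ)..φ, h θ) + ∫ θ in φ..1, h θ = ∫ θ in (0 : ℝ)..1, h θ :=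
    intervalIntegral.integral_add_adjacent_intervals hint1 hint2
  have e1 : ∫ θ in (0 : ℝ)..φ, h θ = ∫ θ in (0 : ℝ)..φ, t⁻¹ * B ^ (φ - 1 - θ) := by
    apply intervalIntegral.integral_congr
    intro θ hθ
    rw [Set.uIcc_of_le hφ0] at hθ
    simp [hh, hθ.2]
  have e2 : ∫ θ in φ..1, h θ = ∫ θ in φ..1, t⁻¹ * B ^ (φ - θ) := by
    apply intervalIntegral.integral_congr_ae
    filter_upwards with θ hθ
    rw [Set.uIoc_of_le hφ1.le] at hθ
    simp [hh, not_le.mpr hθ.1]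
  have v1 : ∫ θ in (0 : ℝ)..φ, t⁻¹ * B ^ (φ - 1 - θ)
      = t⁻¹ * ((B ^ (φ - 1) - B ^ (-1 : ℝ)) / Real.log B) := by
    rw [intervalIntegral.integral_const_mul]
    have : ∫ θ in (0 : ℝ)..φ, B ^ (φ - 1 - θ)
        = ∫ θ in (φ - 1 - φ)..(φ - 1 - 0), B ^ θ :=
      intervalIntegral.integral_comp_sub_left (fun x => B ^ x) (φ - 1)
    rw [this, show φ - 1 - φ = (-1 : ℝ) by ring, show φ - 1 - (0 : ℝ) = φ - 1 by ring,
      integral_const_rpow_aux hB]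
  have v2 : ∫ θ in φ..1, t⁻¹ * B ^ (φ - θ)
      = t⁻¹ * ((B ^ (0 : ℝ) - B ^ (φ - 1)) / Real.log B) := by
    rw [intervalIntegral.integral_const_mul]
    have : ∫ θ in φ..1, B ^ (φ - θ) = ∫ θ in (φ - 1)..(φ - φ), B ^ θ :=
      intervalIntegral.integral_comp_sub_left (fun x => B ^ x) φ
    rw [this, show φ - φ = (0 : ℝ) by ring, integral_const_rpow_aux hB]
  rw [step1, ← step2, e1, e2, v1, v2]
  rw [Real.rpow_zero, Real.rpow_neg_one]
  field_simp
  ring
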